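/- arXiv:1904.09228 — 6 statements merged into one kernel-verified Lean document; each statement's English description precedes it below -/
import Mathlib

section
/- For any nonnegative reals x and y (not both zero), x·log(x/((x+y)/2)) + y·log(y/((x+y)/2)) ≤ (x−y)²/(x+y), where 0·log(0/c) is interpreted as 0. -/
theorem stmt_0 (x y : ℝ) (hx : 0 ≤ x) (hy : 0 ≤ y) (hxy : x + y ≠ 0) :
    x * Real.log (x / ((x + y) / 2)) + y * Real.log (y / ((x + y) / 2))
      ≤ (x - y) ^ 2 / (x + y) := by
  have hs : 0 < x + y := lt_of_le_of_ne (by positivity) (Ne.symm hxy)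
  have hm : 0 < (x + y) / 2 := by linarith
  have key : ∀ z : ℝ, 0 ≤ z → z * Real.log (z / ((x + y) / 2)) ≤ z * (z / ((x + y) / 2) - 1) := by
    intro z hz
    rcases eq_or_lt_of_le hz with h | h
    · simp [← h]
    · exact mul_le_mul_of_nonneg_left
        (Real.log_le_sub_one_of_pos (div_pos h hm)) hz
  have h1 := key x hx
  have h2 := key y hy
  have : x * (x / ((x + y) / 2) - 1) + y * (y / ((x + y) / 2) - 1)
      = (x - y) ^ 2 / (x + y) := by
    field_simp
    ring
  linarith
end

section
/- (Ballot theorem) Consider lattice paths of length n starting at the origin where each step is +1 or −1. For any integer v with |v| ≤ n and v ≡ n (mod 2), the number of such paths ending at v that never revisit the origin after time 0 equals (|v|/n) times the total number of paths from the origin ending at v at time n. -/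
/-!
A path that never returns to `0` and ends at `v > 0` stays positive, because its steps are `±1`;
flipping every step handles `v < 0`. Removing the last step shows that positive paths `P(n, v)`
and all paths `T(n, v)` satisfy the same recursion `X(n + 1, v) = X(n, v - 1) + X(n, v + 1)`,
which telescopes to the reflection identity `P(n + 1, v) = T(n, v - 1) - T(n, v + 1)`. Since
`T(n, 2k - n) = C(n, k)`, the theorem reduces to
`(n + 1) (C(n, k) - C(n, k + 1)) = (2k + 1 - n) C(n + 1, k + 1)`.
-/

open Finset
open scoped Pointwise

namespace LatticePath

variable {n : ℕ}

def step (b : Bool) : ℤ := if b then 1 else -1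

def height (f : Fin n → Bool) (k : ℕ) : ℤ :=
  ∑ j ∈ univ.filter (fun j : Fin n => (j : ℕ) < k), step (f j)

open scoped Classical in
noncomputable def pathsIn (A : Set ℤ) (n : ℕ) (v : ℤ) : Finset (Fin n → Bool) :=
  {f | ∑ j, step (f j) = v ∧ ∀ k, 1 ≤ k → k ≤ n → height f k ∈ A}

lemma step_not (b : Bool) : step (!b) = -step b := by
  cases b <;> simp [step]

lemma sum_step_eq (f : Fin n → Bool) : ∑ j, step (f j) = 2 * #{j | f j} - n := by
  have h (b : Bool) : step b = 2 * (if b then 1 else 0) - 1 := by cases b <;> simp [step]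
  simp only [h, sum_sub_distrib, ← mul_sum, sum_boole, sum_const, card_univ, Fintype.card_fin,
    nsmul_eq_mul, mul_one]

lemma height_of_le (f : Fin n → Bool) {k : ℕ} (hk : n ≤ k) : height f k = ∑ j, step (f j) := by
  rw [height, filter_true_of_mem fun j _ => by omega]

lemma height_succ (f : Fin n → Bool) {k : ℕ} (hk : k < n) :
    height f (k + 1) = height f k + step (f ⟨k, hk⟩) := by
  have h : univ.filter (fun j : Fin n => (j : ℕ) < k + 1)
      = insert ⟨k, hk⟩ (univ.filter fun j : Fin n => (j : ℕ) < k) := by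
    ext j
    simp only [mem_filter, mem_univ, true_and, mem_insert, Fin.ext_iff]
    omega
  rw [height, h, sum_insert (by simp), add_comm]
  rfl

lemma height_snoc (g : Fin n → Bool) (b : Bool) {k : ℕ} (hk : k ≤ n) :
    height (Fin.snoc g b : Fin (n + 1) → Bool) k = height g k := by
  simp only [height, sum_filter, Fin.sum_univ_castSucc, Fin.val_castSucc, Fin.snoc_castSucc,
    Fin.val_last]
  rw [if_neg (by omega), add_zero]

lemma height_not (f : Fin n → Bool) (k : ℕ) : height (fun j => !f j) k = -height f k := by
  simp only [height, step_not, sum_neg_distrib]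

lemma pos_of_succ_le_add_one_of_ne_zero {a : ℕ → ℤ} (hstep : ∀ k < n, a (k + 1) ≤ a k + 1)
    (hne : ∀ k, 1 ≤ k → k ≤ n → a k ≠ 0) (hn : 0 < a n) {m : ℕ} (hm : 1 ≤ m) (hmn : m ≤ n) :
    0 < a m := by
  induction hmn using Nat.decreasingInduction with
  | self => exact hn
  | of_succ k hk ih =>
    have hsucc := ih (by omega)
    have hle := hstep k hk
    have hk0 := hne k hm hk.le
    omega

variable {A : Set ℤ} {v : ℤ}

lemma mem_pathsIn {f : Fin n → Bool} :
    f ∈ pathsIn A n v ↔ ∑ j, step (f j) = v ∧ ∀ k, 1 ≤ k → k ≤ n → height f k ∈ A := by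
  simp [pathsIn]

lemma pathsIn_mono {B : Set ℤ} (h : A ⊆ B) : pathsIn A n v ⊆ pathsIn B n v := fun _ hf =>
  mem_pathsIn.2 ⟨(mem_pathsIn.1 hf).1, fun k hk hkn => h ((mem_pathsIn.1 hf).2 k hk hkn)⟩

lemma pathsIn_eq_empty (hn : n ≠ 0) (hv : v ∉ A) : pathsIn A n v = ∅ := by
  refine eq_empty_of_forall_notMem fun f hf => hv ?_
  obtain ⟨hsum, hA⟩ := mem_pathsIn.1 hf
  simpa [height_of_le f le_rfl, hsum] using hA n (by omega) le_rfl

lemma card_pathsIn_zero (A : Set ℤ) (v : ℤ) : #(pathsIn A 0 v) = if v = 0 then 1 else 0 := by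
  split_ifs with hv
  · refine card_eq_one.2 ⟨Fin.elim0, ?_⟩
    ext f
    simp only [mem_pathsIn, univ_eq_empty, sum_empty, mem_singleton, Subsingleton.elim f Fin.elim0]
    exact ⟨fun _ => trivial, fun _ => ⟨hv.symm, fun k hk h0 => absurd hk (by omega)⟩⟩
  · refine card_eq_zero.2 (eq_empty_of_forall_notMem fun f hf => hv ?_)
    simp only [mem_pathsIn, univ_eq_empty, sum_empty] at hf
    exact hf.1.symm

lemma bnot_mem_pathsIn_neg_iff {f : Fin n → Bool} :
    (fun j => !f j) ∈ pathsIn (-A) n (-v) ↔ f ∈ pathsIn A n v := by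
  simp [mem_pathsIn, height_not, step_not, sum_neg_distrib]

lemma card_pathsIn_neg (hA : -A = A) (n : ℕ) (v : ℤ) :
    #(pathsIn A n (-v)) = #(pathsIn A n v) := by
  nth_rw 1 [← hA]
  refine card_nbij' (fun f j => !f j) (fun f j => !f j) (fun f hf => ?_)
    (fun f hf => bnot_mem_pathsIn_neg_iff.2 hf) (fun f _ => by simp) (fun f _ => by simp)
  simpa using bnot_mem_pathsIn_neg_iff (f := fun j => !f j) |>.1 (by simpa using hf)

lemma snoc_mem_pathsIn_iff (hv : v ∈ A) (g : Fin n → Bool) (b : Bool) :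
    (Fin.snoc g b : Fin (n + 1) → Bool) ∈ pathsIn A (n + 1) v ↔ g ∈ pathsIn A n (v - step b) := by
  have hsum : ∑ j, step ((Fin.snoc g b : Fin (n + 1) → Bool) j) = ∑ j, step (g j) + step b := by
    simp [Fin.sum_univ_castSucc]
  simp only [mem_pathsIn, hsum, eq_sub_iff_add_eq]
  refine and_congr_right fun hgv => ⟨fun h k hk hkn => ?_, fun h k hk hkn => ?_⟩
  · simpa [height_snoc g b hkn] using h k hk (by omega)
  · rcases (show k ≤ n ∨ k = n + 1 by omega) with hkn | rfl
    · simpa [height_snoc g b hkn] using h k hk hkn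
    · rwa [height_of_le _ le_rfl, hsum, hgv]

lemma card_filter_last_eq_card_pathsIn (hv : v ∈ A) (b : Bool) :
    #{f ∈ pathsIn A (n + 1) v | f (Fin.last n) = b} = #(pathsIn A n (v - step b)) := by
  refine card_nbij' Fin.init (fun g => Fin.snoc g b) (fun f hf => ?_) (fun g hg => ?_)
    (fun f hf => ?_) (fun g _ => Fin.init_snoc _ _)
  · obtain ⟨hf, rfl⟩ := mem_filter.1 hf
    rwa [mem_coe, ← snoc_mem_pathsIn_iff hv, Fin.snoc_init_self]
  · exact mem_filter.2 ⟨(snoc_mem_pathsIn_iff hv g b).2 hg, Fin.snoc_last _ _⟩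
  · obtain ⟨-, rfl⟩ := mem_filter.1 hf
    exact Fin.snoc_init_self f

lemma card_pathsIn_succ (hv : v ∈ A) :
    #(pathsIn A (n + 1) v) = #(pathsIn A n (v - 1)) + #(pathsIn A n (v + 1)) := by
  rw [← card_filter_add_card_filter_not (s := pathsIn A (n + 1) v)
    (fun f => f (Fin.last n) = true)]
  simp [card_filter_last_eq_card_pathsIn hv, step]

lemma pathsIn_compl_zero_eq_Ioi (hv : 0 < v) : pathsIn {0}ᶜ n v = pathsIn (Set.Ioi 0) n v := by
  ext f
  simp only [mem_pathsIn, Set.mem_compl_singleton_iff, Set.mem_Ioi]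
  refine and_congr_right fun hsum => ⟨fun h k hk hkn => ?_, fun h k hk hkn => (h k hk hkn).ne'⟩
  refine pos_of_succ_le_add_one_of_ne_zero (fun j hj => ?_) h ?_ hk hkn
  · rw [height_succ f hj]
    have : step (f ⟨j, hj⟩) ≤ 1 := by unfold step; split <;> omega
    omega
  · rwa [height_of_le f le_rfl, hsum]

/- The reflection principle. Both sides satisfy the last-step recursion, so it telescopes; at
`v = 1` the vanishing term `#(pathsIn (Ioi 0) (n + 1) 0)` is matched by the symmetry of
`pathsIn univ n (±1)`. -/
lemma card_pathsIn_Ioi_succ (n : ℕ) {v : ℤ} (hv : 0 < v) :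
    (#(pathsIn (Set.Ioi 0) (n + 1) v) : ℤ)
      = #(pathsIn Set.univ n (v - 1)) - #(pathsIn Set.univ n (v + 1)) := by
  induction n generalizing v with
  | zero =>
    rw [card_pathsIn_succ (Set.mem_Ioi.2 hv)]
    simp only [card_pathsIn_zero]
    split_ifs <;> omega
  | succ n ih =>
    rw [card_pathsIn_succ (Set.mem_Ioi.2 hv), card_pathsIn_succ (Set.mem_univ _),
      card_pathsIn_succ (Set.mem_univ _)]
    push_cast
    rw [ih (by omega : 0 < v + 1), add_sub_cancel_right]
    rcases (show v = 1 ∨ 0 < v - 1 by omega) with rfl | hv1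
    · have hsymm := card_pathsIn_neg Set.neg_univ n 1
      rw [pathsIn_eq_empty n.succ_ne_zero (by simp)]
      norm_num [hsymm]
    · rw [ih hv1, sub_add_cancel]
      ring

lemma card_pathsIn_univ (n k : ℕ) : #(pathsIn Set.univ n (2 * k - n)) = n.choose k := by
  rw [← card_fin n, ← card_powersetCard k univ, card_fin]
  refine card_nbij' (fun f => ({j | f j} : Finset (Fin n))) (fun s j => decide (j ∈ s))
    (fun f hf => ?_) (fun s hs => ?_) (fun f _ => by simp) (fun s _ => by ext; simp)
  · simp only [mem_coe, mem_pathsIn, sum_step_eq] at hf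
    simp only [mem_coe, mem_powersetCard, subset_univ, true_and]
    omega
  · simp only [mem_coe, mem_powersetCard, subset_univ, true_and] at hs
    simp [mem_pathsIn, sum_step_eq, hs]

lemma succ_mul_choose_sub_choose {n k : ℕ} (hk : k ≤ n) :
    ((n + 1) * (n.choose k - n.choose (k + 1)) : ℤ) = (2 * k + 1 - n) * (n + 1).choose (k + 1) := by
  have h₁ := Nat.add_one_mul_choose_eq n k
  have h₂ := Nat.choose_mul_succ_eq n (k + 1)
  rw [show n + 1 - (k + 1) = n - k by omega] at h₂
  zify [hk] at h₁ h₂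
  linear_combination h₁ - h₂

theorem natCast_mul_card_pathsIn_compl_zero (n : ℕ) (v : ℤ) :
    (n * #(pathsIn {0}ᶜ n v) : ℤ) = |v| * #(pathsIn Set.univ n v) := by
  wlog hv : 0 ≤ v generalizing v
  · rw [← abs_neg, ← card_pathsIn_neg (A := {0}ᶜ) (by simp), ← card_pathsIn_neg Set.neg_univ]
    exact this (-v) (by omega)
  rcases hv.eq_or_lt with rfl | hv
  · rcases n with _ | n
    · simp
    · simp [pathsIn_eq_empty n.succ_ne_zero]
  rw [pathsIn_compl_zero_eq_Ioi hv, abs_of_pos hv]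
  rcases (pathsIn Set.univ n v).eq_empty_or_nonempty with hT | ⟨f, hf⟩
  · have hP : pathsIn (Set.Ioi 0) n v = ∅ :=
      subset_empty.1 (hT ▸ pathsIn_mono (Set.subset_univ _))
    simp [hP, hT]
  obtain ⟨k, hkn, rfl⟩ : ∃ k ≤ n, v = 2 * k - n :=
    ⟨#{j | f j}, card_le_univ _ |>.trans_eq (card_fin n),
      by rw [← sum_step_eq]; exact (mem_pathsIn.1 hf).1.symm⟩
  obtain ⟨n, rfl⟩ : ∃ m, n = m + 1 := Nat.exists_eq_add_one.2 (by omega)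
  obtain ⟨k, rfl⟩ : ∃ j, k = j + 1 := Nat.exists_eq_add_one.2 (by omega)
  have hprev : (2 * (k + 1 : ℕ) - (n + 1 : ℕ) - 1 : ℤ) = 2 * k - n := by push_cast; ring
  have hnext : (2 * (k + 1 : ℕ) - (n + 1 : ℕ) + 1 : ℤ) = 2 * (k + 1 : ℕ) - n := by push_cast; ring
  rw [card_pathsIn_Ioi_succ n hv, hprev, hnext, card_pathsIn_univ, card_pathsIn_univ,
    card_pathsIn_univ]
  push_cast
  linear_combination succ_mul_choose_sub_choose (by omega : k ≤ n)

end LatticePath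

open LatticePath

theorem stmt_3_general (n : ℕ) (hn : 1 ≤ n) (v : ℤ) :
    (Nat.card {f : Fin n → Bool //
        (∑ j : Fin n, (if f j then (1:ℤ) else -1)) = v ∧
        ∀ k : ℕ, 1 ≤ k → k ≤ n →
          (∑ j ∈ Finset.univ.filter (fun j : Fin n => (j : ℕ) < k),
            (if f j then (1:ℤ) else -1)) ≠ 0} : ℚ)
      = ((|v| : ℤ) : ℚ) / (n : ℚ) *
        (Nat.card {f : Fin n → Bool //
          (∑ j : Fin n, (if f j then (1:ℤ) else -1)) = v} : ℚ) := by
  have hN : Nat.card {f : Fin n → Bool // ∑ j, step (f j) = v ∧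
      ∀ k : ℕ, 1 ≤ k → k ≤ n → height f k ≠ 0} = #(pathsIn {0}ᶜ n v) := by
    rw [Nat.card_eq_fintype_card, Fintype.card_subtype]
    congr 1
    ext f
    simp [mem_pathsIn]
  have hT : Nat.card {f : Fin n → Bool // ∑ j, step (f j) = v} = #(pathsIn Set.univ n v) := by
    rw [Nat.card_eq_fintype_card, Fintype.card_subtype]
    congr 1
    ext f
    simp [mem_pathsIn]
  have key := natCast_mul_card_pathsIn_compl_zero n v
  simp only [step, height] at hN hT
  rw [hN, hT, div_mul_eq_mul_div, eq_div_iff (by positivity), mul_comm]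
  exact_mod_cast key

/-- The Ballot theorem: among ±1-step lattice paths of length `n` from the origin
ending at `v`, the number of paths whose partial sums never revisit the origin is a
`|v|/n` fraction of all paths ending at `v`. -/
theorem stmt_3 (n : ℕ) (hn : 1 ≤ n) (v : ℤ) (hv : |v| ≤ (n : ℤ))
    (hpar : (v + n) % 2 = 0) :
    (Nat.card {f : Fin n → Bool //
        (∑ j : Fin n, (if f j then (1:ℤ) else -1)) = v ∧
        ∀ k : ℕ, 1 ≤ k → k ≤ n →
          (∑ j ∈ Finset.univ.filter (fun j : Fin n => (j : ℕ) < k),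
            (if f j then (1:ℤ) else -1)) ≠ 0} : ℚ)
      = ((|v| : ℤ) : ℚ) / (n : ℚ) *
        (Nat.card {f : Fin n → Bool //
          (∑ j : Fin n, (if f j then (1:ℤ) else -1)) = v} : ℚ) :=
  stmt_3_general n hn v
end

section
/- For a coin of bias p ∈ [0,1] and any n ≥ 1, ∑_{k=0}^{n} (Bin(n,1/2+Δ,k) − Bin(n,1/2−Δ,k))² / Bin(n,1/2−Δ,k) = ((1+12Δ²)/(1−4Δ²))^n − 1, where Bin(n,p,k) = binomial(n,k)p^k(1−p)^{n−k} and Δ ∈ (0,1/2). -/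
/-- Exact chi-square divergence between `Binomial(n, 1/2+Δ)` and `Binomial(n, 1/2−Δ)`. -/
theorem stmt_12 (Δ : ℝ) (hΔ0 : 0 < Δ) (hΔ : Δ < 1/2) (n : ℕ) (hn : 1 ≤ n) :
    ∑ k ∈ Finset.range (n+1),
      ((n.choose k : ℝ) * (1/2 + Δ) ^ k * (1/2 - Δ) ^ (n - k) -
        (n.choose k : ℝ) * (1/2 - Δ) ^ k * (1/2 + Δ) ^ (n - k)) ^ 2 /
      ((n.choose k : ℝ) * (1/2 - Δ) ^ k * (1/2 + Δ) ^ (n - k))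
      = ((1 + 12 * Δ ^ 2) / (1 - 4 * Δ ^ 2)) ^ n - 1 := by
  have hp : (0:ℝ) < 1/2 + Δ := by linarith
  have hq : (0:ℝ) < 1/2 - Δ := by linarith
  set p : ℝ := 1/2 + Δ with hpdef
  set q : ℝ := 1/2 - Δ with hqdef
  have key : ∀ k ∈ Finset.range (n+1),
      ((n.choose k : ℝ) * p ^ k * q ^ (n - k) -
        (n.choose k : ℝ) * q ^ k * p ^ (n - k)) ^ 2 /
      ((n.choose k : ℝ) * q ^ k * p ^ (n - k))
      = (p^2/q) ^ k * (q^2/p) ^ (n-k) * (n.choose k : ℝ)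
        - 2 * (p ^ k * q ^ (n - k) * (n.choose k : ℝ))
        + q ^ k * p ^ (n - k) * (n.choose k : ℝ) := by
    intro k hk
    have hkn : k ≤ n := Nat.lt_succ_iff.mp (Finset.mem_range.mp hk)
    have hC : (0:ℝ) < (n.choose k : ℝ) := by
      exact_mod_cast Nat.choose_pos hkn
    have hpk : (0:ℝ) < p ^ k := pow_pos hp k
    have hqk : (0:ℝ) < q ^ k := pow_pos hq k
    have hpn : (0:ℝ) < p ^ (n-k) := pow_pos hp _
    have hqn : (0:ℝ) < q ^ (n-k) := pow_pos hq _
    rw [div_pow, div_pow, ← pow_mul, ← pow_mul]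
    field_simp
    ring
  rw [Finset.sum_congr rfl key]
  rw [Finset.sum_add_distrib, Finset.sum_sub_distrib, ← add_pow, ← Finset.mul_sum,
    ← add_pow, ← add_pow]
  have hpq : p + q = 1 := by simp [hpdef, hqdef]; ring
  have hqp : q + p = 1 := by rw [add_comm]; exact hpq
  have hmain : p^2/q + q^2/p = (1 + 12 * Δ ^ 2) / (1 - 4 * Δ ^ 2) := by
    have h4 : (0:ℝ) < 1 - 4 * Δ ^ 2 := by nlinarith
    rw [div_add_div _ _ (ne_of_gt hq) (ne_of_gt hp), div_eq_div_iff (by positivity) (ne_of_gt h4)]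
    simp only [hpdef, hqdef]
    ring
  rw [hpq, hqp, hmain, one_pow]
  ring
end

section
/- Let J ≥ 0 and let g_0,…,g_J be nonnegative reals with ∑_j g_j = K, and suppose K² ≥ 100·log(2C)·2^J for a constant C ≥ 1. For each j, let r_j ≥ (1/C)·exp(g_j²/2^j) and π_j = ∏_{i=j}^J r_i. Then there exists j ∈ {0,…,J} such that π_j · 2^{j−J} ≥ exp(0.01·K²/2^J). -/
/-- Probability-boosting lemma: per-level tail bounds assemble into an overall bound. -/
theorem stmt_13 (J : ℕ) (g r : ℕ → ℝ) (K C : ℝ) (hC : 1 ≤ C)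
    (hg : ∀ j ∈ Finset.range (J+1), 0 ≤ g j)
    (hK : ∑ j ∈ Finset.range (J+1), g j = K)
    (hbig : 100 * Real.log (2 * C) * 2 ^ J ≤ K ^ 2)
    (hr : ∀ j ∈ Finset.range (J+1), (1 / C) * Real.exp ((g j) ^ 2 / 2 ^ j) ≤ r j) :
    ∃ j ∈ Finset.range (J+1),
      Real.exp (0.01 * K ^ 2 / 2 ^ J) ≤ (∏ i ∈ Finset.Icc j J, r i) * 2 ^ j / 2 ^ J := by
  have hCpos : (0:ℝ) < C := by linarith
  have hL : 0 < Real.log (2*C) := Real.log_pos (by linarith)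
  have h2J : (0:ℝ) < 2 ^ J := by positivity
  have hK2 : 0 < K ^ 2 := lt_of_lt_of_le (by positivity) hbig
  have hKnn : 0 ≤ K := hK ▸ Finset.sum_nonneg hg
  have hKpos : 0 < K := by
    rcases hKnn.lt_or_eq with h | h
    · exact h
    · exfalso; rw [← h] at hK2; simp at hK2
  -- step 1: find good level j
  have hex : ∃ j ∈ Finset.range (J+1), K/5 * 0.8 ^ (J - j) ≤ g j := by
    by_contra hcon
    push_neg at hcon
    have hsum : K < ∑ j ∈ Finset.range (J+1), K/5 * (0.8:ℝ) ^ (J-j) := by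
      have := Finset.sum_lt_sum_of_nonempty (s := Finset.range (J+1)) ⟨0, by simp⟩ hcon
      rwa [hK] at this
    have hre : ∑ j ∈ Finset.range (J+1), (0.8:ℝ)^(J-j)
        = ∑ m ∈ Finset.range (J+1), (0.8:ℝ)^m := by
      have := Finset.sum_range_reflect (fun m => (0.8:ℝ)^m) (J+1)
      simpa using this
    have hgeom : ∑ m ∈ Finset.range (J+1), (0.8:ℝ)^m ≤ 5 := by
      have := geom_sum_eq (by norm_num : (0.8:ℝ) ≠ 1) (J+1)
      rw [this]
      have h8 : (0:ℝ) ≤ (0.8:ℝ)^(J+1) := by positivity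
      have h8' : (0.8:ℝ)^(J+1) ≤ 1 := pow_le_one₀ (by norm_num) (by norm_num)
      rw [div_le_iff_of_neg (by norm_num : (0.8:ℝ) - 1 < 0)]
      linarith
    have : ∑ j ∈ Finset.range (J+1), K/5 * (0.8:ℝ) ^ (J-j) ≤ K := by
      rw [← Finset.mul_sum, hre]
      calc K/5 * ∑ m ∈ Finset.range (J+1), (0.8:ℝ)^m ≤ K/5 * 5 := by
            apply mul_le_mul_of_nonneg_left hgeom (by linarith)
        _ = K := by ring
    linarith
  obtain ⟨j, hjmem, hgj⟩ := hex
  refine ⟨j, hjmem, ?_⟩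
  have hjJ : j ≤ J := by simpa [Nat.lt_succ_iff] using Finset.mem_range.mp hjmem
  set m := J - j with hm
  have hjm : j + m = J := by omega
  set L := Real.log (2*C) with hLdef
  set n := J - j + 1 with hn
  -- product lower bound
  have hsub : ∀ i ∈ Finset.Icc j J, i ∈ Finset.range (J+1) := by
    intro i hi
    rw [Finset.mem_Icc] at hi
    exact Finset.mem_range.mpr (by omega)
  have hprod1 : ∏ i ∈ Finset.Icc j J, ((1/C) * Real.exp ((g i)^2 / 2^i))
      ≤ ∏ i ∈ Finset.Icc j J, r i := by
    apply Finset.prod_le_prod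
    · intro i hi; positivity
    · intro i hi; exact hr i (hsub i hi)
  have hcard : (Finset.Icc j J).card = n := by
    rw [Nat.card_Icc]; omega
  have hprod2 : ∏ i ∈ Finset.Icc j J, ((1/C) * Real.exp ((g i)^2 / 2^i))
      = (1/C)^n * Real.exp (∑ i ∈ Finset.Icc j J, (g i)^2 / 2^i) := by
    rw [Finset.prod_mul_distrib, Finset.prod_const, hcard, Real.exp_sum]
  have hsum_ge : (g j)^2 / 2^j ≤ ∑ i ∈ Finset.Icc j J, (g i)^2 / 2^i := by
    apply Finset.single_le_sum (f := fun i => (g i)^2 / (2:ℝ)^i)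
    · intro i hi; positivity
    · exact Finset.mem_Icc.mpr ⟨le_refl j, hjJ⟩
  set A := (g j)^2 / (2:ℝ)^j with hA
  have hprod : (1/C)^n * Real.exp A ≤ ∏ i ∈ Finset.Icc j J, r i := by
    calc (1/C)^n * Real.exp A
        ≤ (1/C)^n * Real.exp (∑ i ∈ Finset.Icc j J, (g i)^2 / 2^i) := by
          apply mul_le_mul_of_nonneg_left (Real.exp_le_exp.mpr hsum_ge) (by positivity)
      _ = ∏ i ∈ Finset.Icc j J, ((1/C) * Real.exp ((g i)^2 / 2^i)) := hprod2.symm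
      _ ≤ ∏ i ∈ Finset.Icc j J, r i := hprod1
  -- key exponent inequality
  have hAge : K^2/25 * 1.28^m / 2^J ≤ A := by
    have hgj0 : 0 ≤ K/5 * (0.8:ℝ)^m := by positivity
    have hsq : (K/5 * (0.8:ℝ)^m)^2 ≤ (g j)^2 := by
      apply sq_le_sq' (by linarith [hg j hjmem]) hgj
    have h2jm : (2:ℝ)^j * 2^m = 2^J := by
      rw [← pow_add, hjm]
    have h2jpos : (0:ℝ) < 2^j := by positivity
    have heq : (K/5 * (0.8:ℝ)^m)^2 / 2^j = K^2/25 * 1.28^m / 2^J := by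
      have h64 : ((0.8:ℝ)^m)^2 = (0.64:ℝ)^m := by
        rw [← pow_mul, mul_comm, pow_mul]; norm_num
      have h128 : (0.64:ℝ)^m * 2^m = 1.28^m := by
        rw [← mul_pow]; norm_num
      rw [← h2jm, ← h128, mul_pow, h64]
      field_simp
      ring
    rw [← heq, hA]
    gcongr
  have hP : (1:ℝ) + 0.28 * m ≤ (1.28:ℝ)^m := by
    have := one_add_mul_le_pow (by norm_num : (-2:ℝ) ≤ 0.28) m
    calc (1:ℝ) + 0.28 * m = 1 + (m:ℝ) * 0.28 := by ring
      _ ≤ (1 + 0.28)^m := this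
      _ = (1.28:ℝ)^m := by norm_num
  have hkey : 0.01 * K^2 / 2^J + n * L ≤ A := by
    have hn' : (n:ℝ) = (m:ℝ) + 1 := by
      have h : n = m + 1 := by omega
      exact_mod_cast h
    have h1 : 0.01*K^2 + ((m:ℝ)+1)*L*2^J ≤ K^2/25 * 1.28^m := by
      nlinarith [mul_nonneg (sq_nonneg K) (sub_nonneg.mpr hP),
        mul_nonneg (sub_nonneg.mpr hbig) (Nat.cast_nonneg (α := ℝ) m),
        mul_nonneg (mul_nonneg hL.le h2J.le) (Nat.cast_nonneg (α := ℝ) m),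
        sub_nonneg.mpr hbig, mul_pos hL h2J]
    have h2 : 0.01 * K^2 / 2^J + n * L ≤ K^2/25 * 1.28^m / 2^J := by
      rw [hn']
      have h3 : (0.01*K^2 + ((m:ℝ)+1)*L*2^J) / 2^J ≤ K^2/25 * 1.28^m / 2^J := by
        gcongr
      calc 0.01 * K^2 / 2^J + ((m:ℝ)+1) * L
          = (0.01*K^2 + ((m:ℝ)+1)*L*2^J) / 2^J := by field_simp
        _ ≤ K^2/25 * 1.28^m / 2^J := h3
    exact h2.trans hAge
  -- assemble
  have hlogL : Real.log 2 + Real.log C = L := by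
    rw [hLdef, Real.log_mul two_ne_zero (by positivity)]
  have hmn : (m:ℝ) ≤ (n:ℝ) := by
    have : m ≤ n := by omega
    exact_mod_cast this
  have hexp_ineq : 0.01 * K^2 / 2^J ≤ A - n * Real.log C - m * Real.log 2 := by
    have hlog2 : 0 < Real.log 2 := Real.log_pos (by norm_num)
    have hlogC : 0 ≤ Real.log C := Real.log_nonneg hC
    have : (n:ℝ) * Real.log C + (m:ℝ) * Real.log 2 ≤ (n:ℝ) * L := by
      rw [← hlogL]
      have : (m:ℝ) * Real.log 2 ≤ (n:ℝ) * Real.log 2 :=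
        mul_le_mul_of_nonneg_right hmn hlog2.le
      linarith
    linarith
  have hrw : ((1:ℝ)/C)^n * Real.exp A * 2^j / 2^J
      = Real.exp (A - n * Real.log C - m * Real.log 2) := by
    have hC1 : ((1:ℝ)/C)^n = Real.exp (-(n * Real.log C)) := by
      rw [Real.exp_neg, Real.exp_nat_mul, Real.exp_log hCpos, one_div, inv_pow]
    have h2m : (2:ℝ)^m = Real.exp (m * Real.log 2) := by
      rw [Real.exp_nat_mul, Real.exp_log (by norm_num : (0:ℝ) < 2)]
    have h2jm : (2:ℝ)^j * 2^m = 2^J := by rw [← pow_add, hjm]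
    have h2mpos : (0:ℝ) < 2^m := by positivity
    have h2jpos : (0:ℝ) < (2:ℝ)^j := by positivity
    have hdiv : (2:ℝ)^j / 2^J = Real.exp (-(m * Real.log 2)) := by
      rw [← h2jm, Real.exp_neg, ← h2m]
      field_simp
    rw [mul_div_assoc, hdiv, hC1, ← Real.exp_add, ← Real.exp_add]
    ring_nf
  calc Real.exp (0.01 * K^2 / 2^J)
      ≤ Real.exp (A - n * Real.log C - m * Real.log 2) := Real.exp_le_exp.mpr hexp_ineq
    _ = ((1:ℝ)/C)^n * Real.exp A * 2^j / 2^J := hrw.symm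
    _ ≤ (∏ i ∈ Finset.Icc j J, r i) * 2 ^ j / 2 ^ J := by gcongr
end

section
/- Fix an even Δ-free setting: for Δ ∈ (0,1/2), 0 ≤ k ≤ n, let h⁺ = (1/2+Δ)^k(1/2−Δ)^{n−k} and h⁻ = (1/2−Δ)^k(1/2+Δ)^{n−k}. Then (1/2+Δ)·((1+2Δ)/(1−2Δ)·r − 1)² + (1/2−Δ)·((1−2Δ)/(1+2Δ)·r − 1)² ≤ (r−1)² + O(Δ²)·r², where r = h⁺/h⁻ and the implied constant is universal for Δ below a universal constant. -/
/-! After one flip the ratio becomes `x r` or `y r` with `x = (1+2Δ)/(1-2Δ)`, `y = 1/x`, with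
probabilities `1/2 ± Δ`. Expanding the square, the expected potential is
`E[r'²] - 2 E[r'] + 1`. The mean `E[r'] = r (1+12Δ²)/(1-4Δ²)` is at least `r`, so the linear
term can only help, and the second moment is `E[r'²] = r² (1 + (48Δ² + 64Δ⁴)/(1-4Δ²)²)`, whose
excess over `r²` is at most `100 Δ² r²` once `Δ ≤ 1/4`. -/

lemma two_point_sq_sub_one_le {p q x y r : ℝ} (hpq : p + q = 1) (hmean : 1 ≤ p * x + q * y)
    (hr : 0 ≤ r) :
    p * (x * r - 1) ^ 2 + q * (y * r - 1) ^ 2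
      ≤ (r - 1) ^ 2 + (p * x ^ 2 + q * y ^ 2 - 1) * r ^ 2 := by
  have expand : p * (x * r - 1) ^ 2 + q * (y * r - 1) ^ 2
      = (r - 1) ^ 2 + (p * x ^ 2 + q * y ^ 2 - 1) * r ^ 2 - 2 * r * (p * x + q * y - 1) := by
    linear_combination hpq
  rw [expand]
  nlinarith [mul_nonneg hr (sub_nonneg.2 hmean)]

section BiasedFlip

variable {Δ : ℝ}

lemma biasedFlip_mean_eq (h₁ : 1 - 2 * Δ ≠ 0) (h₂ : 1 + 2 * Δ ≠ 0) :
    (1/2 + Δ) * ((1 + 2*Δ) / (1 - 2*Δ)) + (1/2 - Δ) * ((1 - 2*Δ) / (1 + 2*Δ))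
      = (1 + 12 * Δ ^ 2) / ((1 - 2 * Δ) * (1 + 2 * Δ)) := by
  field_simp
  ring

lemma one_le_biasedFlip_mean (hlo : -(1/2) < Δ) (hhi : Δ < 1/2) :
    1 ≤ (1/2 + Δ) * ((1 + 2*Δ) / (1 - 2*Δ)) + (1/2 - Δ) * ((1 - 2*Δ) / (1 + 2*Δ)) := by
  have hden : 0 < (1 - 2 * Δ) * (1 + 2 * Δ) := by nlinarith
  rw [biasedFlip_mean_eq (by linarith) (by linarith), le_div_iff₀ hden]
  nlinarith [sq_nonneg Δ]

lemma biasedFlip_second_moment_eq (h₁ : 1 - 2 * Δ ≠ 0) (h₂ : 1 + 2 * Δ ≠ 0) :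
    (1/2 + Δ) * ((1 + 2*Δ) / (1 - 2*Δ)) ^ 2 + (1/2 - Δ) * ((1 - 2*Δ) / (1 + 2*Δ)) ^ 2
      = 1 + (48 * Δ ^ 2 + 64 * Δ ^ 4) / ((1 - 2 * Δ) * (1 + 2 * Δ)) ^ 2 := by
  field_simp
  ring

lemma biasedFlip_second_moment_le (h : |Δ| ≤ 1/4) :
    (1/2 + Δ) * ((1 + 2*Δ) / (1 - 2*Δ)) ^ 2 + (1/2 - Δ) * ((1 - 2*Δ) / (1 + 2*Δ)) ^ 2
      ≤ 1 + 100 * Δ ^ 2 := by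
  obtain ⟨hlo, hhi⟩ := abs_le.1 h
  have hsq : Δ ^ 2 ≤ 1/16 := by nlinarith
  rw [biasedFlip_second_moment_eq (by linarith) (by linarith), add_le_add_iff_left,
    div_le_iff₀ (by nlinarith)]
  nlinarith [mul_nonneg (sq_nonneg Δ) (sub_nonneg.2 hsq), sq_nonneg (Δ ^ 2)]

end BiasedFlip

/-- One-step growth bound for the quadratic potential `(r−1)²` of the likelihood ratio
`r = h⁺/h⁻` under one more flip of a bias-`(1/2+Δ)` coin. -/
theorem stmt_17 : ∃ c > (0:ℝ), ∃ δ₀ > (0:ℝ), ∀ Δ : ℝ, 0 < Δ → Δ < 1/2 → Δ ≤ δ₀ →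
    ∀ n k : ℕ, k ≤ n → ∀ r : ℝ,
    r = ((1/2 + Δ) ^ k * (1/2 - Δ) ^ (n - k)) / ((1/2 - Δ) ^ k * (1/2 + Δ) ^ (n - k)) →
    (1/2 + Δ) * ((1 + 2*Δ) / (1 - 2*Δ) * r - 1) ^ 2
      + (1/2 - Δ) * ((1 - 2*Δ) / (1 + 2*Δ) * r - 1) ^ 2
      ≤ (r - 1) ^ 2 + c * Δ ^ 2 * r ^ 2 := by
  refine ⟨100, by norm_num, 1/4, by norm_num, ?_⟩
  intro Δ hΔ0 hΔhalf hΔδ n k _ r hr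
  have hm : 0 < 1/2 - Δ := by linarith
  have hr0 : 0 ≤ r := by rw [hr]; positivity
  have hsecond := biasedFlip_second_moment_le (abs_le.2 ⟨by linarith, hΔδ⟩)
  calc _ ≤ (r - 1) ^ 2 + ((1/2 + Δ) * ((1 + 2*Δ) / (1 - 2*Δ)) ^ 2
          + (1/2 - Δ) * ((1 - 2*Δ) / (1 + 2*Δ)) ^ 2 - 1) * r ^ 2 :=
        two_point_sq_sub_one_le (by ring) (one_le_biasedFlip_mean (by linarith) hΔhalf) hr0
    _ ≤ (r - 1) ^ 2 + 100 * Δ ^ 2 * r ^ 2 := by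
        gcongr
        linarith
end

section
/- There is a universal constant C such that for all sufficiently small Δ > 0, all n ≥ 1, and sign σ ∈ {+1,−1}: ∑_{k=0}^{n} exp((k − (1/2 + σΔ)n)²/n) · binomial(n,k)·(1/2+σΔ)^k(1/2−σΔ)^{n−k} ≤ C. -/
/-!
Linearize the Gaussian weight (Hubbard–Stratonovich): `exp (x² / 2)` is the average of
`exp (x t)` against the standard Gaussian density. Weighting by the Binomial law turns the sum
into a Gaussian average of the centered Binomial moment generating function at `t √(2 / n)`,
which Hoeffding's lemma bounds by `exp (t² / 4)`; the remaining Gaussian integral is `√2`,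
uniformly in `n` and in `p ∈ [0, 1]`.
-/

open Real MeasureTheory ProbabilityTheory Finset

theorem bernoulli_centered_mgf_le {p : ℝ} (hp₀ : 0 ≤ p) (hp₁ : p ≤ 1) (s : ℝ) :
    p * exp (s * (1 - p)) + (1 - p) * exp (s * -p) ≤ exp (s ^ 2 / 8) := by
  let X : Bool → ℝ := fun b ↦ if b then 1 - p else -p
  let μ : Measure Bool := Ber(true, false, ⟨p, hp₀, hp₁⟩)
  have hX : HasSubgaussianMGF X ((‖(1 - p) - -p‖₊ / 2) ^ 2) μ := by
    refine hasSubgaussianMGF_of_mem_Icc_of_integral_eq_zero Measurable.of_discrete.aemeasurable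
      (ae_of_all _ fun b ↦ ?_) ?_
    · cases b <;> simp [X]
    · simp only [μ, X, integral_bernoulliMeasure, if_true, Bool.false_eq_true, if_false,
        smul_eq_mul]
      ring
  have hv : ((‖(1 - p) - -p‖₊ / 2) ^ 2 : NNReal) = 1 / 4 := by
    ext; norm_num
  have h := hX.mgf_le s
  rw [hv] at h
  rw [show s ^ 2 / 8 = (1 / 4 : NNReal) * s ^ 2 / 2 by norm_num; ring]
  simpa [mgf, μ, X, integral_bernoulliMeasure] using h

theorem binomial_centered_mgf_eq (n : ℕ) (p s : ℝ) :
    ∑ k ∈ range (n + 1), n.choose k * p ^ k * (1 - p) ^ (n - k) * exp (s * (k - n * p)) =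
      (p * exp (s * (1 - p)) + (1 - p) * exp (s * -p)) ^ n := by
  rw [add_pow]
  refine sum_congr rfl fun k hk ↦ ?_
  have hkn : k ≤ n := Nat.lt_succ_iff.mp (mem_range.mp hk)
  rw [mul_pow, mul_pow, ← exp_nat_mul, ← exp_nat_mul, Nat.cast_sub hkn]
  have : s * (k - n * p) = k * (s * (1 - p)) + (n - k) * (s * -p) := by ring
  rw [this, exp_add]
  ring

theorem binomial_centered_mgf_le {p : ℝ} (hp₀ : 0 ≤ p) (hp₁ : p ≤ 1) (n : ℕ) (s : ℝ) :
    ∑ k ∈ range (n + 1), n.choose k * p ^ k * (1 - p) ^ (n - k) * exp (s * (k - n * p)) ≤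
      exp (n * s ^ 2 / 8) := by
  rw [binomial_centered_mgf_eq, mul_div_assoc, exp_nat_mul]
  exact pow_le_pow_left₀ (by positivity) (bernoulli_centered_mgf_le hp₀ hp₁ s) n

theorem exp_mul_sub_sq_div_two (x t : ℝ) :
    exp (x * t - t ^ 2 / 2) = exp (x ^ 2 / 2) * exp (-(1 / 2) * (t - x) ^ 2) := by
  rw [← exp_add]; ring_nf

theorem integrable_exp_mul_sub_sq_div_two (x : ℝ) :
    Integrable fun t ↦ exp (x * t - t ^ 2 / 2) := by
  simp_rw [exp_mul_sub_sq_div_two]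
  exact ((integrable_exp_neg_mul_sq (by norm_num)).comp_sub_right x).const_mul _

theorem integral_exp_mul_sub_sq_div_two (x : ℝ) :
    ∫ t, exp (x * t - t ^ 2 / 2) = √(2 * π) * exp (x ^ 2 / 2) := by
  simp_rw [exp_mul_sub_sq_div_two]
  rw [integral_const_mul, integral_sub_right_eq_self (fun t ↦ exp (-(1 / 2) * t ^ 2)),
    integral_gaussian, mul_comm, show π / (1 / 2) = 2 * π by ring]

theorem sum_mul_exp_sq_div_two_le {ι : Type*} (s : Finset ι) (w x : ι → ℝ) {v : ℝ} (hv : v < 1)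
    (hmgf : ∀ t, ∑ i ∈ s, w i * exp (t * x i) ≤ exp (v * t ^ 2 / 2)) :
    ∑ i ∈ s, w i * exp (x i ^ 2 / 2) ≤ (√(1 - v))⁻¹ := by
  have h2π : 0 < √(2 * π) := by positivity
  have hlinearize : ∑ i ∈ s, w i * exp (x i ^ 2 / 2) =
      (√(2 * π))⁻¹ * ∫ t, ∑ i ∈ s, w i * exp (x i * t - t ^ 2 / 2) := by
    rw [integral_finsetSum _ fun i _ ↦ (integrable_exp_mul_sub_sq_div_two _).const_mul _,
      mul_sum]
    refine sum_congr rfl fun i _ ↦ ?_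
    rw [integral_const_mul, integral_exp_mul_sub_sq_div_two]
    field_simp
  have hpointwise : ∀ t, ∑ i ∈ s, w i * exp (x i * t - t ^ 2 / 2) ≤ exp (-((1 - v) / 2) * t ^ 2) := by
    intro t
    calc ∑ i ∈ s, w i * exp (x i * t - t ^ 2 / 2)
        = (∑ i ∈ s, w i * exp (t * x i)) * exp (-(t ^ 2 / 2)) := by
          rw [sum_mul]
          refine sum_congr rfl fun i _ ↦ ?_
          rw [sub_eq_add_neg, exp_add, mul_comm t]; ring
      _ ≤ exp (v * t ^ 2 / 2) * exp (-(t ^ 2 / 2)) := by gcongr; exact hmgf t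
      _ = exp (-((1 - v) / 2) * t ^ 2) := by rw [← exp_add]; ring_nf
  have hv' : 0 < (1 - v) / 2 := by linarith
  calc ∑ i ∈ s, w i * exp (x i ^ 2 / 2)
      ≤ (√(2 * π))⁻¹ * ∫ t, exp (-((1 - v) / 2) * t ^ 2) := by
        rw [hlinearize]
        refine mul_le_mul_of_nonneg_left ?_ (by positivity)
        exact integral_mono (integrable_finsetSum _ fun i _ ↦
          (integrable_exp_mul_sub_sq_div_two _).const_mul _) (integrable_exp_neg_mul_sq hv') hpointwise
    _ = (√(1 - v))⁻¹ := by
        rw [integral_gaussian, show π / ((1 - v) / 2) = 2 * π / (1 - v) by field_simp,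
          sqrt_div (by positivity)]
        field_simp

theorem sum_exp_sq_div_mul_binomial_le {p : ℝ} (hp₀ : 0 ≤ p) (hp₁ : p ≤ 1) {n : ℕ} (hn : 0 < n) :
    ∑ k ∈ range (n + 1), exp ((k - p * n) ^ 2 / n) * (n.choose k * p ^ k * (1 - p) ^ (n - k)) ≤
      √2 := by
  have hn' : (0 : ℝ) < n := by exact_mod_cast hn
  have hc : √(2 / n) ^ 2 = 2 / n := sq_sqrt (by positivity)
  have hmgf : ∀ t : ℝ, ∑ k ∈ range (n + 1), n.choose k * p ^ k * (1 - p) ^ (n - k) *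
      exp (t * ((k - p * n) * √(2 / n))) ≤ exp (1 / 2 * t ^ 2 / 2) := by
    intro t
    convert binomial_centered_mgf_le hp₀ hp₁ n (t * √(2 / n)) using 2
    · ring_nf
    · rw [mul_pow, hc]
      field_simp
      ring
  have h := sum_mul_exp_sq_div_two_le (range (n + 1)) _ _ (by norm_num) hmgf
  rw [show (1 : ℝ) - 1 / 2 = 2⁻¹ by norm_num, sqrt_inv, inv_inv] at h
  convert h using 2 with k
  rw [mul_comm, mul_pow, hc]
  field_simp

/-- Sub-Gaussian property of the Binomial pmf: the `Binomial(n, 1/2 ± Δ)` law weighted by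
the inverse Gaussian factor has uniformly bounded mass. -/
theorem stmt_18 : ∃ C : ℝ, ∃ δ₀ > (0:ℝ), ∀ Δ : ℝ, 0 < Δ → Δ ≤ δ₀ →
    ∀ n : ℕ, 1 ≤ n → ∀ σ : ℝ, σ = 1 ∨ σ = -1 →
    ∑ k ∈ Finset.range (n+1),
      Real.exp (((k : ℝ) - (1/2 + σ * Δ) * n) ^ 2 / n) *
        ((n.choose k : ℝ) * (1/2 + σ * Δ) ^ k * (1/2 - σ * Δ) ^ (n - k)) ≤ C := by
  refine ⟨√2, 1 / 2, by norm_num, fun Δ hΔ hΔ₀ n hn σ hσ ↦ ?_⟩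
  have hp : 0 ≤ 1 / 2 + σ * Δ ∧ 1 / 2 + σ * Δ ≤ 1 := by
    rcases hσ with rfl | rfl <;> constructor <;> linarith
  rw [show 1 / 2 - σ * Δ = 1 - (1 / 2 + σ * Δ) by ring]
  exact sum_exp_sq_div_mul_binomial_le hp.1 hp.2 hn
end
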